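/- Let m ≥ 4 and n ≥ 4 be even integers and let 1 ≤ d ≤ n/2 − 1. Then the Cayley graph Cay(Z_m × Z_n, {±1} × {±d}) can be decomposed into two C_m-factors. -/
import Mathlib


open SimpleGraph

/-- `H` is a `C_k`-factor: a 2-regular spanning graph all of whose
connected components have exactly `k` vertices (hence are `k`-cycles). -/
def IsCycleFactor {V : Type*} (H : SimpleGraph V) (k : ℕ) : Prop :=
  (∀ v, (H.neighborSet v).ncard = 2) ∧
  (∀ v, (H.connectedComponentMk v).supp.ncard = k)

/-- `H` is a perfect matching (1-factor): every vertex has exactly one neighbour. -/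
def IsOneFactor {V : Type*} (H : SimpleGraph V) : Prop :=
  ∀ v, (H.neighborSet v).ncard = 1

/-- A partition of the edge set of `G` into cycle factors with prescribed cycle lengths. -/
def CycleDecomp {V : Type*} {k : ℕ} (G : SimpleGraph V) (ℓ : Fin k → ℕ) : Prop :=
  ∃ f : Fin k → SimpleGraph V,
    (∀ i, f i ≤ G ∧ IsCycleFactor (f i) (ℓ i)) ∧
    ∀ e ∈ G.edgeSet, ∃! i, e ∈ (f i).edgeSet

/-- A partition of the edge set of `G` into cycle factors with prescribed cycle
lengths together with one perfect matching. -/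
def CycleDecompPM {V : Type*} {k : ℕ} (G : SimpleGraph V) (ℓ : Fin k → ℕ) : Prop :=
  ∃ (f : Fin k → SimpleGraph V) (M : SimpleGraph V),
    (∀ i, f i ≤ G ∧ IsCycleFactor (f i) (ℓ i)) ∧ M ≤ G ∧ IsOneFactor M ∧
    ∀ e ∈ G.edgeSet,
      ((∃! i, e ∈ (f i).edgeSet) ∧ e ∉ M.edgeSet) ∨
      ((∀ i, e ∉ (f i).edgeSet) ∧ e ∈ M.edgeSet)

/-- The Cayley graph on `ZMod m × ZMod n` with connection set `S`
(symmetrised, loops removed). -/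
def cay (m n : ℕ) (S : Set (ZMod m × ZMod n)) : SimpleGraph (ZMod m × ZMod n) :=
  SimpleGraph.fromRel (fun x y => x - y ∈ S)



namespace CayAux

variable {m n : ℕ}

def pr (h : 2 ∣ m) : ZMod m →+* ZMod 2 := ZMod.castHom h (ZMod 2)

def stp (h : 2 ∣ m) (g : ZMod 2 → ZMod n) (a : ZMod m × ZMod n) : ZMod m × ZMod n :=
  (a.1 + 1, a.2 + g (pr h a.1))

def prd (h : 2 ∣ m) (g : ZMod 2 → ZMod n) (a : ZMod m × ZMod n) : ZMod m × ZMod n :=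
  (a.1 - 1, a.2 - g (pr h a.1 + 1))

def FG (h : 2 ∣ m) (g : ZMod 2 → ZMod n) : SimpleGraph (ZMod m × ZMod n) :=
  SimpleGraph.fromRel (fun a b => b = stp h g a)

lemma zmod2_cases (q : ZMod 2) : q = 0 ∨ q = 1 := by revert q; decide

lemma zmod2_ne_iff {p q : ZMod 2} : p ≠ q ↔ p = q + 1 := by revert p q; decide

lemma one_ne (hm : 4 ≤ m) : (1 : ZMod m) ≠ 0 := by
  intro h
  have := (CharP.cast_eq_zero_iff (ZMod m) m 1).mp (by exact_mod_cast h)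
  have := Nat.le_of_dvd one_pos this
  omega

lemma two_ne (hm : 4 ≤ m) : (2 : ZMod m) ≠ 0 := by
  intro h
  have := (CharP.cast_eq_zero_iff (ZMod m) m 2).mp (by exact_mod_cast h)
  have := Nat.le_of_dvd two_pos this
  omega

variable (h : 2 ∣ m) (g : ZMod 2 → ZMod n)

lemma hgsum (hg : g 0 + g 1 = 0) (q : ZMod 2) : g q + g (q + 1) = 0 := by
  rcases zmod2_cases q with rfl | rfl
  · simpa using hg
  · have : (1 : ZMod 2) + 1 = 0 := by decide
    rw [this, add_comm]; exact hg

lemma stp_prd (a : ZMod m × ZMod n) : stp h g (prd h g a) = a := by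
  have h1 : pr h (a.1 - 1) = pr h a.1 + 1 := by
    have : (-1 : ZMod 2) = 1 := by decide
    simp [sub_eq_add_neg, map_add, map_neg, map_one, this]
  simp [stp, prd, h1]

lemma prd_stp (a : ZMod m × ZMod n) : prd h g (stp h g a) = a := by
  have h1 : pr h (a.1 + 1) = pr h a.1 + 1 := by simp [map_add, map_one]
  have h2 : pr h a.1 + 1 + 1 = pr h a.1 := by
    have : (1 : ZMod 2) + 1 = 0 := by decide
    rw [add_assoc, this, add_zero]
  simp [stp, prd, h1, h2]

lemma stp_ne (hm : 4 ≤ m) (a : ZMod m × ZMod n) : stp h g a ≠ a := by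
  intro hEq
  have h1 : a.1 + 1 = a.1 := congrArg Prod.fst hEq
  exact one_ne hm (by linear_combination h1)

lemma FG_adj {a b : ZMod m × ZMod n} :
    (FG h g).Adj a b ↔ a ≠ b ∧ (b = stp h g a ∨ a = stp h g b) := by
  simp [FG, fromRel_adj]

lemma neighborSet_eq (hm : 4 ≤ m) (a : ZMod m × ZMod n) :
    (FG h g).neighborSet a = {stp h g a, prd h g a} := by
  ext b
  simp only [mem_neighborSet, FG_adj, Set.mem_insert_iff, Set.mem_singleton_iff]
  constructor
  · rintro ⟨-, hb | hb⟩
    · exact Or.inl hb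
    · right; rw [hb, prd_stp]
  · rintro (rfl | rfl)
    · exact ⟨(stp_ne h g hm a).symm, Or.inl rfl⟩
    · refine ⟨?_, Or.inr (stp_prd h g a).symm⟩
      intro hEq
      have h3 := stp_prd h g a
      rw [← hEq] at h3
      exact stp_ne h g hm a h3

lemma stp_ne_prd (hm : 4 ≤ m) (a : ZMod m × ZMod n) : stp h g a ≠ prd h g a := by
  intro hEq
  have h1 : a.1 + 1 = a.1 - 1 := congrArg Prod.fst hEq
  apply two_ne hm
  linear_combination h1

lemma deg_two (hm : 4 ≤ m) (a : ZMod m × ZMod n) :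
    ((FG h g).neighborSet a).ncard = 2 := by
  rw [neighborSet_eq h g hm a]
  exact Set.ncard_pair (stp_ne_prd h g hm a)

/-- explicit connected component -/
def C (a : ZMod m × ZMod n) : Set (ZMod m × ZMod n) :=
  {b | (pr h b.1 = pr h a.1 ∧ b.2 = a.2) ∨
       (pr h b.1 ≠ pr h a.1 ∧ b.2 = a.2 + g (pr h a.1))}

lemma stp_mem_C (hg : g 0 + g 1 = 0) {a x : ZMod m × ZMod n} :
    stp h g x ∈ C h g a ↔ x ∈ C h g a := by
  have hfst : pr h (stp h g x).1 = pr h x.1 + 1 := by simp [stp, map_add, map_one]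
  have hsnd : (stp h g x).2 = x.2 + g (pr h x.1) := rfl
  by_cases hc : pr h x.1 = pr h a.1
  · have h1 : pr h (stp h g x).1 ≠ pr h a.1 := by
      rw [hfst, hc, zmod2_ne_iff]
    constructor
    · rintro (⟨h2, -⟩ | ⟨-, h2⟩)
      · exact absurd h2 h1
      · left
        refine ⟨hc, ?_⟩
        rw [hsnd, hc] at h2
        exact add_right_cancel h2
    · rintro (⟨-, h2⟩ | ⟨h2, -⟩)
      · right
        exact ⟨h1, by rw [hsnd, h2, hc]⟩
      · exact absurd hc h2
  · have hc' : pr h x.1 = pr h a.1 + 1 := zmod2_ne_iff.mp hc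
    have h1 : pr h (stp h g x).1 = pr h a.1 := by
      rw [hfst, hc', add_assoc]
      simp [show (1 : ZMod 2) + 1 = 0 by decide]
    constructor
    · rintro (⟨-, h2⟩ | ⟨h2, -⟩)
      · right
        refine ⟨hc, ?_⟩
        rw [hsnd, hc'] at h2
        have := hgsum g hg (pr h a.1)
        -- x.2 + g (pr a.1 + 1) = a.2  →  x.2 = a.2 + g (pr a.1)
        have : x.2 = a.2 - g (pr h a.1 + 1) := by linear_combination h2
        rw [this]
        linear_combination - hgsum g hg (pr h a.1)
      · exact absurd h1 h2
    · rintro (⟨h2, -⟩ | ⟨-, h2⟩)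
      · exact absurd h2 hc
      · left
        refine ⟨h1, ?_⟩
        rw [hsnd, hc', h2]
        linear_combination hgsum g hg (pr h a.1)

lemma adj_C (hg : g 0 + g 1 = 0) {a x y : ZMod m × ZMod n}
    (hxy : (FG h g).Adj x y) : x ∈ C h g a ↔ y ∈ C h g a := by
  rcases (FG_adj h g).mp hxy with ⟨-, rfl | rfl⟩
  · exact (stp_mem_C h g hg).symm
  · exact stp_mem_C h g hg

lemma reach_mem_C (hg : g 0 + g 1 = 0) {a b : ZMod m × ZMod n}
    (hr : (FG h g).Reachable b a) : b ∈ C h g a := by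
  obtain ⟨w⟩ := hr
  induction w with
  | nil => exact Or.inl ⟨rfl, rfl⟩
  | cons hadj p ih => exact (adj_C h g hg hadj).mpr ih

lemma stp_stp (hg : g 0 + g 1 = 0) (a : ZMod m × ZMod n) :
    stp h g (stp h g a) = (a.1 + 2, a.2) := by
  have h1 : pr h (a.1 + 1) = pr h a.1 + 1 := by simp [map_add, map_one]
  have h2 := hgsum g hg (pr h a.1)
  simp only [stp, h1]
  refine Prod.ext ?_ ?_
  · show a.1 + 1 + 1 = a.1 + 2
    ring
  · show a.2 + g (pr h a.1) + g (pr h a.1 + 1) = a.2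
    linear_combination h2

lemma iter2 (hg : g 0 + g 1 = 0) (a : ZMod m × ZMod n) (j : ℕ) :
    (stp h g)^[2 * j] a = (a.1 + (2 * j : ℕ), a.2) := by
  induction j with
  | zero => simp
  | succ j ih =>
    have h3 : 2 * (j + 1) = 2 + 2 * j := by ring
    rw [h3, Function.iterate_add_apply, ih]
    show stp h g (stp h g _) = _
    rw [stp_stp h g hg]
    refine Prod.ext ?_ rfl
    show (a.1 + (2 * j : ℕ)) + 2 = a.1 + ((2 + 2 * j : ℕ) : ZMod m)
    push_cast
    ring

lemma reach_iter (hm : 4 ≤ m) (a : ZMod m × ZMod n) (k : ℕ) :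
    (FG h g).Reachable ((stp h g)^[k] a) a := by
  induction k with
  | zero => exact Reachable.refl a
  | succ k ih =>
    refine Reachable.trans ?_ ih
    rw [Function.iterate_succ_apply']
    exact Adj.reachable ((FG_adj h g).mpr
      ⟨(stp_ne h g hm _), Or.inr rfl⟩)

lemma pr_natCast (k : ℕ) : pr h ((k : ZMod m)) = (k : ZMod 2) := by
  simp [pr, map_natCast]

lemma even_exists (x : ZMod m) (hm : 4 ≤ m) (hx : pr h x = 0) :
    ∃ j : ℕ, ((2 * j : ℕ) : ZMod m) = x := by
  haveI : NeZero m := ⟨by omega⟩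
  have hv : ((x.val : ℕ) : ZMod 2) = 0 := by
    have : pr h ((x.val : ℕ) : ZMod m) = 0 := by
      rwa [show ((x.val : ℕ) : ZMod m) = x by simp [ZMod.natCast_val, ZMod.cast_id]]
    rwa [pr_natCast] at this
  have h2 : 2 ∣ x.val := by
    exact_mod_cast (ZMod.natCast_eq_zero_iff x.val 2).mp hv
  obtain ⟨j, hj⟩ := h2
  exact ⟨j, by rw [← hj]; simp [ZMod.natCast_val, ZMod.cast_id]⟩

lemma mem_C_reach (hg : g 0 + g 1 = 0) (hm : 4 ≤ m) {a b : ZMod m × ZMod n}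
    (hb : b ∈ C h g a) : (FG h g).Reachable b a := by
  rcases hb with ⟨h1, h2⟩ | ⟨h1, h2⟩
  · have hx : pr h (b.1 - a.1) = 0 := by
      rw [map_sub, h1, sub_self]
    obtain ⟨j, hj⟩ := even_exists h _ hm hx
    have : (stp h g)^[2 * j] a = b := by
      rw [iter2 h g hg, hj]
      exact Prod.ext (by ring) h2.symm
    rw [← this]
    exact reach_iter h g hm a _
  · have hx : pr h (b.1 - a.1 - 1) = 0 := by
      rw [map_sub, map_sub, map_one, zmod2_ne_iff.mp h1]
      ring
    obtain ⟨j, hj⟩ := even_exists h _ hm hx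
    have : (stp h g)^[2 * j + 1] a = b := by
      rw [Function.iterate_succ_apply', iter2 h g hg]
      have hpr : pr h (a.1 + ((2 * j : ℕ) : ZMod m)) = pr h a.1 := by
        rw [map_add, pr_natCast]
        have hz : ((2 * j : ℕ) : ZMod 2) = 0 := by
          push_cast
          rw [show (2 : ZMod 2) = 0 by decide]
          ring
        rw [hz, add_zero]
      simp only [stp, hpr]
      refine Prod.ext ?_ h2.symm
      simp only []
      rw [hj]; ring
    rw [← this]
    exact reach_iter h g hm a _

lemma supp_eq (hg : g 0 + g 1 = 0) (hm : 4 ≤ m) (a : ZMod m × ZMod n) :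
    ((FG h g).connectedComponentMk a).supp = C h g a := by
  ext b
  rw [ConnectedComponent.mem_supp_iff, ConnectedComponent.eq]
  exact ⟨reach_mem_C h g hg, mem_C_reach h g hg hm⟩

lemma C_ncard (hm : 4 ≤ m) (a : ZMod m × ZMod n) : (C h g a).ncard = m := by
  haveI : NeZero m := ⟨by omega⟩
  set f : ZMod m → ZMod m × ZMod n :=
    fun x => (x, if pr h x = pr h a.1 then a.2 else a.2 + g (pr h a.1)) with hf
  have hinj : Function.Injective f := fun x y hxy => congrArg Prod.fst hxy
  have hrange : C h g a = Set.range f := by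
    ext b
    constructor
    · rintro (⟨h1, h2⟩ | ⟨h1, h2⟩)
      · exact ⟨b.1, by rw [hf]; simp only [if_pos h1]; exact Prod.ext rfl h2.symm⟩
      · exact ⟨b.1, by rw [hf]; simp only [if_neg h1]; exact Prod.ext rfl h2.symm⟩
    · rintro ⟨x, rfl⟩
      by_cases hc : pr h x = pr h a.1
      · left; rw [hf]; simp [hc]
      · right; rw [hf]; simp [hc]
  rw [hrange, ← Nat.card_coe_set_eq, Nat.card_range_of_injective hinj, Nat.card_zmod]

end CayAux

theorem stmt_1 (m n d : ℕ) (hm : 4 ≤ m) (hme : Even m) (hn : 4 ≤ n) (hne : Even n)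
    (hd1 : 1 ≤ d) (hd2 : d ≤ n / 2 - 1) :
    CycleDecomp
      (cay m n ({((1 : ZMod m), (d : ZMod n)), (1, -(d : ZMod n)),
        (-1, (d : ZMod n)), (-1, -(d : ZMod n))} : Set (ZMod m × ZMod n)))
      (fun _ : Fin 2 => m) := by
  classical
  have h2 : 2 ∣ m := hme.two_dvd
  obtain ⟨t, ht⟩ := hne
  set S : Set (ZMod m × ZMod n) := {((1 : ZMod m), (d : ZMod n)), (1, -(d : ZMod n)),
      (-1, (d : ZMod n)), (-1, -(d : ZMod n))} with hS
  set g0 : ZMod 2 → ZMod n := fun q => if q = 0 then (d : ZMod n) else -(d : ZMod n) with hg0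
  set g1 : ZMod 2 → ZMod n := fun q => if q = 0 then -(d : ZMod n) else (d : ZMod n) with hg1
  have hg0s : g0 0 + g0 1 = 0 := by simp [hg0]
  have hg1s : g1 0 + g1 1 = 0 := by simp [hg1]
  -- 2d ≠ 0 in ZMod n
  have hnd : (2 * (d : ZMod n)) ≠ 0 := by
    intro hz
    have hz' : ((2 * d : ℕ) : ZMod n) = 0 := by push_cast; exact hz
    have hdvd := (CharP.cast_eq_zero_iff (ZMod n) n (2 * d)).mp hz'
    have := Nat.le_of_dvd (by omega) hdvd
    omega
  have hg01 : ∀ q, g0 q ≠ g1 q := by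
    intro q hq
    rcases CayAux.zmod2_cases q with rfl | rfl
    · simp only [hg0, hg1, if_pos rfl] at hq
      exact hnd (by linear_combination hq)
    · simp only [hg0, hg1, if_neg (by decide : (1 : ZMod 2) ≠ 0)] at hq
      exact hnd (by linear_combination - hq)
  set f : Fin 2 → SimpleGraph (ZMod m × ZMod n) := ![CayAux.FG h2 g0, CayAux.FG h2 g1] with hf
  have hgS : ∀ (g : ZMod 2 → ZMod n), (∀ q, g q = (d : ZMod n) ∨ g q = -(d : ZMod n)) →
      ∀ a : ZMod m × ZMod n, CayAux.stp h2 g a - a ∈ S := by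
    intro g hg a
    have : CayAux.stp h2 g a - a = (1, g (CayAux.pr h2 a.1)) := by
      simp [CayAux.stp, Prod.ext_iff]
    rw [this]
    rcases hg (CayAux.pr h2 a.1) with hq | hq <;> rw [hq] <;> simp [hS]
  have hg0v : ∀ q, g0 q = (d : ZMod n) ∨ g0 q = -(d : ZMod n) := by
    intro q; by_cases hq : q = 0 <;> simp [hg0, hq]
  have hg1v : ∀ q, g1 q = (d : ZMod n) ∨ g1 q = -(d : ZMod n) := by
    intro q; by_cases hq : q = 0 <;> simp [hg1, hq]
  have hle : ∀ (g : ZMod 2 → ZMod n), (∀ q, g q = (d : ZMod n) ∨ g q = -(d : ZMod n)) →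
      CayAux.FG h2 g ≤ cay m n S := by
    intro g hg a b hab
    rcases (CayAux.FG_adj h2 g).mp hab with ⟨hne', hb | hb⟩
    · exact ⟨hne', Or.inr (by rw [hb]; exact hgS g hg a)⟩
    · exact ⟨hne', Or.inl (by rw [hb]; exact hgS g hg b)⟩
  refine ⟨f, ?_, ?_⟩
  · intro i
    fin_cases i
    · refine ⟨hle g0 hg0v, ?_, ?_⟩
      · intro v; exact CayAux.deg_two h2 g0 hm v
      · intro v
        show ((CayAux.FG h2 g0).connectedComponentMk v).supp.ncard = m
        rw [CayAux.supp_eq h2 g0 hg0s hm v, CayAux.C_ncard h2 g0 hm v]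
    · refine ⟨hle g1 hg1v, ?_, ?_⟩
      · intro v; exact CayAux.deg_two h2 g1 hm v
      · intro v
        show ((CayAux.FG h2 g1).connectedComponentMk v).supp.ncard = m
        rw [CayAux.supp_eq h2 g1 hg1s hm v, CayAux.C_ncard h2 g1 hm v]
  · -- edge cover
    have hone : (1 : ZMod m) ≠ 0 := CayAux.one_ne hm
    have htwo : (2 : ZMod m) ≠ 0 := CayAux.two_ne hm
    -- existence helper
    have hcov : ∀ u v : ZMod m × ZMod n,
        (u - v = ((1 : ZMod m), (d : ZMod n)) ∨ u - v = ((1 : ZMod m), -(d : ZMod n))) →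
        ∃ i : Fin 2, (f i).Adj u v := by
      intro u v huv
      have hne2 : u ≠ v := by
        intro hEq
        rcases huv with huv | huv <;>
          · rw [hEq, sub_self] at huv
            exact hone (congrArg Prod.fst huv).symm
      have hfst : u.1 = v.1 + 1 := by
        rcases huv with huv | huv <;>
          · have := congrArg Prod.fst huv
            simp only [Prod.fst_sub] at this
            linear_combination this
      have hstp : ∀ (g : ZMod 2 → ZMod n), g (CayAux.pr h2 v.1) = u.2 - v.2 →
          (CayAux.FG h2 g).Adj u v := by
        intro g hgv
        refine (CayAux.FG_adj h2 g).mpr ⟨hne2, Or.inr ?_⟩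
        refine Prod.ext hfst ?_
        show u.2 = v.2 + g (CayAux.pr h2 v.1)
        rw [hgv]; ring
      rcases huv with huv | huv
      · have hsnd : u.2 - v.2 = (d : ZMod n) := by
          have := congrArg Prod.snd huv; simpa using this
        by_cases hp : CayAux.pr h2 v.1 = 0
        · exact ⟨0, by rw [hf]; exact hstp g0 (by rw [hg0]; simp [hp, hsnd])⟩
        · exact ⟨1, by rw [hf]; exact hstp g1 (by rw [hg1]; simp [hp, hsnd])⟩
      · have hsnd : u.2 - v.2 = -(d : ZMod n) := by
          have := congrArg Prod.snd huv; simpa using this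
        by_cases hp : CayAux.pr h2 v.1 = 0
        · exact ⟨1, by rw [hf]; exact hstp g1 (by rw [hg1]; simp [hp, hsnd])⟩
        · exact ⟨0, by rw [hf]; exact hstp g0 (by rw [hg0]; simp [hp, hsnd])⟩
    -- disjointness
    have hdisj : ∀ u v : ZMod m × ZMod n,
        ¬((CayAux.FG h2 g0).Adj u v ∧ (CayAux.FG h2 g1).Adj u v) := by
      rintro u v ⟨ha0, ha1⟩
      rcases (CayAux.FG_adj h2 g0).mp ha0 with ⟨-, hb0 | hb0⟩ <;>
        rcases (CayAux.FG_adj h2 g1).mp ha1 with ⟨-, hb1 | hb1⟩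
      · rw [hb1] at hb0
        have := congrArg Prod.snd hb0
        simp only [CayAux.stp] at this
        exact hg01 _ (add_left_cancel this).symm
      · rw [hb1] at hb0
        have hfst : v.1 = v.1 + 1 + 1 := congrArg Prod.fst hb0
        exact htwo (by linear_combination - hfst)
      · rw [hb0] at hb1
        have hfst : v.1 = v.1 + 1 + 1 := congrArg Prod.fst hb1
        exact htwo (by linear_combination - hfst)
      · rw [hb1] at hb0
        have := congrArg Prod.snd hb0
        simp only [CayAux.stp] at this
        exact hg01 _ (add_left_cancel this).symm
    intro e he
    induction e using Sym2.ind with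
    | _ u v =>
      rw [mem_edgeSet] at he
      obtain ⟨hne', hmem⟩ := he
      have hex : ∃ i : Fin 2, (f i).Adj u v := by
        have hswap : ∀ x y : ZMod m × ZMod n, x - y ∈ S → ∃ i : Fin 2, (f i).Adj x y := by
          intro x y hxy
          rw [hS] at hxy
          simp only [Set.mem_insert_iff, Set.mem_singleton_iff] at hxy
          rcases hxy with hv | hv | hv | hv
          · exact hcov x y (Or.inl hv)
          · exact hcov x y (Or.inr hv)
          · have : y - x = ((1 : ZMod m), -(d : ZMod n)) := by
              rw [show y - x = -(x - y) by ring, hv]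
              exact Prod.ext (by simp) (by simp)
            obtain ⟨i, hi⟩ := hcov y x (Or.inr this)
            exact ⟨i, hi.symm⟩
          · have : y - x = ((1 : ZMod m), (d : ZMod n)) := by
              rw [show y - x = -(x - y) by ring, hv]
              exact Prod.ext (by simp) (by simp)
            obtain ⟨i, hi⟩ := hcov y x (Or.inl this)
            exact ⟨i, hi.symm⟩
        rcases hmem with hmem | hmem
        · exact hswap u v hmem
        · obtain ⟨i, hi⟩ := hswap v u hmem
          exact ⟨i, hi.symm⟩
      obtain ⟨i, hi⟩ := hex
      refine ⟨i, (f i).mem_edgeSet.mpr hi, ?_⟩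
      intro j hj
      rw [mem_edgeSet] at hj
      fin_cases i <;> fin_cases j
      · rfl
      · exact absurd ⟨by simpa [hf] using hi, by simpa [hf] using hj⟩ (hdisj u v)
      · exact absurd ⟨by simpa [hf] using hj, by simpa [hf] using hi⟩ (hdisj u v)
      · rfl
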